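/- In G, for all integers x, y and all j ≥ 0, (a^x u^y v)^j = a^{(⌈j/2⌉ + ⌊j/2⌋ n_1^y n_2)·x} · u^{y·[j odd]} · v^j, where [j odd] is 1 if j is odd and 0 otherwise. -/

import Mathlib

/-!
Put `w = a^x u^y v`. Since `v` is an involution inverting `u` and acting on `⟨a⟩` as `m ↦ n₂ m`,
while `u` acts as `m ↦ n₁ m`, one gets `v w = a^(n₂ x) u^(-y)`, hence
`w² = a^x · u^y a^(n₂ x) u^(-y) = a^((1 + n₁^y n₂) x)`.
The even powers of `w` are therefore powers of `a`, and `w^(2m+1) = w^(2m) · w`.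
-/

section ConjAction

variable {H : Type*} [Group H]

theorem conj_pow_zpow_of_conj_eq_zpow {g b : H} {n : ℤ} (h : g * b * g⁻¹ = b ^ n)
    (y : ℕ) (m : ℤ) : g ^ y * b ^ m * (g ^ y)⁻¹ = b ^ (n ^ y * m) := by
  induction y generalizing m with
  | zero => simp
  | succ y ih =>
    calc g ^ (y + 1) * b ^ m * (g ^ (y + 1))⁻¹ = g * (g ^ y * b ^ m * (g ^ y)⁻¹) * g⁻¹ := by
          rw [pow_succ']; group
      _ = b ^ (n ^ (y + 1) * m) := by
          rw [ih, ← conj_zpow, h, ← zpow_mul, pow_succ']; ring_nf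

theorem sq_zpow_mul_pow_mul_of_involution {a u v : H} {n₁ n₂ : ℤ} (hv : v * v = 1)
    (hua : u * a * u⁻¹ = a ^ n₁) (hva : v * a * v⁻¹ = a ^ n₂) (hvu : v * u * v⁻¹ = u⁻¹)
    (x : ℤ) (y : ℕ) : (a ^ x * u ^ y * v) ^ 2 = a ^ ((1 + n₁ ^ y * n₂) * x) := by
  have hv_mul : v * (a ^ x * u ^ y * v) = a ^ (n₂ * x) * (u ^ y)⁻¹ :=
    calc v * (a ^ x * u ^ y * v) = (v * a ^ x * v⁻¹) * (v * u ^ y * v⁻¹) * (v * v) := by group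
      _ = a ^ (n₂ * x) * (u ^ y)⁻¹ := by
          rw [← conj_zpow, hva, ← zpow_mul, ← conj_pow, hvu, inv_pow, hv, mul_one]
  calc (a ^ x * u ^ y * v) ^ 2 = a ^ x * (u ^ y * (v * (a ^ x * u ^ y * v))) := by
        simp only [sq, mul_assoc]
    _ = a ^ x * (u ^ y * a ^ (n₂ * x) * (u ^ y)⁻¹) := by rw [hv_mul]; group
    _ = a ^ ((1 + n₁ ^ y * n₂) * x) := by
        rw [conj_pow_zpow_of_conj_eq_zpow hua, ← zpow_add]; ring_nf

end ConjAction

namespace ZkDl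

def n₁ (l : ℕ) : ℕ := 2 ^ (l - 1) + 1
def n₂ (l : ℕ) : ℕ := 2 ^ (l - 1) - 1

/-- The relations of the presentation
`⟨a, u, v | a^(2^l) = u^k = v^2 = 1, u a u⁻¹ = a^(n₁), v a v = a^(n₂), v u v = u⁻¹⟩`,
with generators `a = 0`, `u = 1`, `v = 2` in `Fin 3`. -/
def rels (l k : ℕ) : Set (FreeGroup (Fin 3)) :=
  { FreeGroup.of 0 ^ 2 ^ l,
    FreeGroup.of 1 ^ k,
    FreeGroup.of 2 ^ 2,
    FreeGroup.of 1 * FreeGroup.of 0 * (FreeGroup.of 1)⁻¹ * (FreeGroup.of 0 ^ n₁ l)⁻¹,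
    FreeGroup.of 2 * FreeGroup.of 0 * FreeGroup.of 2 * (FreeGroup.of 0 ^ n₂ l)⁻¹,
    FreeGroup.of 2 * FreeGroup.of 1 * FreeGroup.of 2 * FreeGroup.of 1 }

/-- The group `Z_{2^l} ⋊ D_k` given by the presentation above. -/
abbrev G (l k : ℕ) : Type := PresentedGroup (rels l k)

def a (l k : ℕ) : G l k := PresentedGroup.of 0
def u (l k : ℕ) : G l k := PresentedGroup.of 1
def v (l k : ℕ) : G l k := PresentedGroup.of 2

variable (l k : ℕ)

theorem v_mul_v : v l k * v l k = 1 := by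
  have h := PresentedGroup.one_of_mem (rels := rels l k) (x := FreeGroup.of 2 ^ 2) (by simp [rels])
  rwa [map_pow, sq] at h

theorem u_mul_a_mul_u_inv : u l k * a l k * (u l k)⁻¹ = a l k ^ (n₁ l : ℤ) := by
  have h := PresentedGroup.mk_eq_mk_of_mul_inv_mem (rels := rels l k)
    (x := FreeGroup.of 1 * FreeGroup.of 0 * (FreeGroup.of 1)⁻¹) (y := FreeGroup.of 0 ^ n₁ l)
    (by simp [rels])
  rw [zpow_natCast]
  rwa [map_mul, map_mul, map_inv, map_pow] at h

theorem v_mul_a_mul_v_inv : v l k * a l k * (v l k)⁻¹ = a l k ^ (n₂ l : ℤ) := by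
  have h := PresentedGroup.mk_eq_mk_of_mul_inv_mem (rels := rels l k)
    (x := FreeGroup.of 2 * FreeGroup.of 0 * FreeGroup.of 2) (y := FreeGroup.of 0 ^ n₂ l)
    (by simp [rels])
  rw [zpow_natCast, inv_eq_of_mul_eq_one_left (v_mul_v l k)]
  rwa [map_mul, map_mul, map_pow] at h

theorem v_mul_u_mul_v_inv : v l k * u l k * (v l k)⁻¹ = (u l k)⁻¹ := by
  have h := PresentedGroup.mk_eq_mk_of_mul_inv_mem (rels := rels l k)
    (x := FreeGroup.of 2 * FreeGroup.of 1 * FreeGroup.of 2) (y := (FreeGroup.of 1)⁻¹)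
    (by simp [rels])
  rw [inv_eq_of_mul_eq_one_left (v_mul_v l k)]
  rwa [map_mul, map_mul, map_inv] at h

end ZkDl

open ZkDl

theorem pow_of_asuyv_general (l k : ℕ) (x : ℤ) (y j : ℕ) :
    (a l k ^ x * u l k ^ y * v l k) ^ j =
      a l k ^ (((((j + 1) / 2 : ℕ) : ℤ) +
          (((j / 2 : ℕ) : ℤ)) * (n₁ l : ℤ) ^ y * (n₂ l : ℤ)) * x) *
        u l k ^ (if Odd j then y else 0) * v l k ^ j := by
  have hsq := sq_zpow_mul_pow_mul_of_involution (v_mul_v l k) (u_mul_a_mul_u_inv l k)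
    (v_mul_a_mul_v_inv l k) (v_mul_u_mul_v_inv l k) x y
  have hv_even (m : ℕ) : v l k ^ (2 * m) = 1 := by rw [pow_mul, sq, v_mul_v, one_pow]
  obtain ⟨m, rfl | rfl⟩ := Nat.even_or_odd' j
  · have hhalf : (2 * m + 1) / 2 = m ∧ 2 * m / 2 = m := by omega
    rw [pow_mul, hsq, ← zpow_natCast, ← zpow_mul, hv_even, hhalf.1, hhalf.2,
      if_neg (Nat.not_odd_iff_even.mpr (even_two_mul m)), pow_zero, mul_one, mul_one]
    ring_nf
  · have hhalf : (2 * m + 1 + 1) / 2 = m + 1 ∧ (2 * m + 1) / 2 = m := by omega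
    rw [pow_succ, pow_mul, hsq, ← zpow_natCast, ← zpow_mul, pow_succ, hv_even, hhalf.1,
      hhalf.2, if_pos (odd_two_mul_add_one m), one_mul, ← mul_assoc, ← mul_assoc, ← zpow_add]
    push_cast
    ring_nf

theorem pow_of_asuyv (l k : ℕ) (hl : 3 ≤ l) (hk : 4 ∣ k) (x : ℤ) (y j : ℕ) :
    (a l k ^ x * u l k ^ y * v l k) ^ j =
      a l k ^ (((((j + 1) / 2 : ℕ) : ℤ) +
          (((j / 2 : ℕ) : ℤ)) * (n₁ l : ℤ) ^ y * (n₂ l : ℤ)) * x) *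
        u l k ^ (if Odd j then y else 0) * v l k ^ j :=
  pow_of_asuyv_general l k x y j
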